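/- arXiv:math/0610701 — 5 statements merged into one kernel-verified Lean document; each statement's English description precedes it below -/
import Mathlib

section
/- Let T₂(ℚ) denote the ℚ-subalgebra of M₂(ℚ) consisting of upper triangular 2×2 rational matrices (matrices X with X₂₁ = 0). Let Γ ⊆ M₂(ℚ) be a subring consisting of upper triangular matrices, finitely generated as a ℤ-module, whose ℚ-span equals T₂(ℚ) (i.e., Γ is a ℤ-order in T₂(ℚ)). Then there is no injective group homomorphism from ℤ × ℤ into the unit group Γˣ. -/
/-! The diagonal entries are ring homomorphisms `Γ → ℚ`. As `Γ` is a finitely generated ℤ-module,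
they take integral values, so they send units to `±1` and the square of every unit of `Γ` is
upper unitriangular. On 2×2 unitriangular matrices the upper right entry is an injective
homomorphism to `(ℚ, +)`, so `z ↦ f z ^ 2` would embed `ℤ²` into `ℚ`; but any two rationals are
ℤ-linearly dependent. -/

open Function

namespace Matrix

section

variable {n R : Type*} [LinearOrder n] [Fintype n]

theorem BlockTriangular.mul_apply_self [NonUnitalNonAssocSemiring R] {M N : Matrix n n R}
    (hM : M.BlockTriangular id) (hN : N.BlockTriangular id) (i : n) :
    (M * N) i i = M i i * N i i := by
  rw [mul_apply, Finset.sum_eq_single i]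
  · intro j _ hji
    rcases hji.lt_or_gt with h | h
    · rw [hM h, zero_mul]
    · rw [hN h, mul_zero]
  · simp

variable (n R) [DecidableEq n] [Semiring R]

def upperUnitriangular : Submonoid (Matrix n n R) where
  carrier := {A | A.BlockTriangular id ∧ ∀ i, A i i = 1}
  one_mem' := ⟨blockTriangular_one, one_apply_eq⟩
  mul_mem' := by
    rintro A B ⟨hA, hA1⟩ ⟨hB, hB1⟩
    exact ⟨hA.mul hB, fun i => by rw [hA.mul_apply_self hB, hA1, hB1, one_mul]⟩

end

theorem blockTriangular_id_iff_fin_two {R : Type*} [Zero R] {M : Matrix (Fin 2) (Fin 2) R} :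
    M.BlockTriangular id ↔ M 1 0 = 0 := by
  refine ⟨fun h => h (by decide), fun h i j hij => ?_⟩
  fin_cases i <;> fin_cases j <;> simp_all

namespace upperUnitriangular

variable {R : Type*} [Semiring R]

def upperRight : upperUnitriangular (Fin 2) R →* Multiplicative R where
  toFun A := Multiplicative.ofAdd ((A : Matrix (Fin 2) (Fin 2) R) 0 1)
  map_one' := by simp
  map_mul' := by
    rintro ⟨A, -, hA1⟩ ⟨B, -, hB1⟩
    simp [mul_apply, Fin.sum_univ_two, hA1 0, hB1 1, ← ofAdd_add, add_comm]

theorem upperRight_injective : Injective (upperRight (R := R)) := by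
  rintro ⟨A, hA, hA1⟩ ⟨B, hB, hB1⟩ h
  rw [blockTriangular_id_iff_fin_two] at hA hB
  have h01 : A 0 1 = B 0 1 := h
  ext i j
  fin_cases i <;> fin_cases j <;> simp_all

end upperUnitriangular

end Matrix

namespace Subring

variable {n R : Type*} [LinearOrder n] [Fintype n] [DecidableEq n] [Ring R]

def diagEntryHom (Γ : Subring (Matrix n n R)) (hΓ : ∀ x ∈ Γ, x.BlockTriangular id) (i : n) :
    Γ →+* R where
  toFun x := (x : Matrix n n R) i i
  map_one' := Matrix.one_apply_eq i
  map_mul' x y := (hΓ x x.2).mul_apply_self (hΓ y y.2) i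
  map_zero' := rfl
  map_add' _ _ := rfl

end Subring

theorem RingHom.map_sq_eq_one_of_isUnit {A : Type*} [Ring A] [Module.Finite ℤ A] (φ : A →+* ℚ)
    {u : A} (hu : IsUnit u) : φ (u ^ 2) = 1 := by
  have hint (x : A) : ∃ m : ℤ, (m : ℚ) = φ x :=
    IsIntegrallyClosed.isIntegral_iff.mp ((Algebra.IsIntegral.isIntegral x).map φ.toIntAlgHom)
  obtain ⟨m, hm⟩ := hint u
  obtain ⟨k, hk⟩ := hint ↑hu.unit⁻¹
  have hmk : φ u * φ ↑hu.unit⁻¹ = 1 := by rw [← map_mul, IsUnit.mul_val_inv, map_one]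
  rw [← hm, ← hk] at hmk
  rw [map_pow, ← hm]
  exact_mod_cast Int.isUnit_sq (IsUnit.of_mul_eq_one k (by exact_mod_cast hmk))

theorem AddMonoidHom.not_injective_int_prod_rat (E : ℤ × ℤ →+ ℚ) : ¬ Injective E := by
  intro hE
  set a := E (1, 0)
  set b := E (0, 1)
  have hb : b ≠ 0 := fun h => by simpa using hE (h.trans E.map_zero.symm)
  -- `(b.num * a.den) * a = b.num * a.num = (a.num * b.den) * b`
  have hrel : E ((b.num * a.den) • (1, 0) - (a.num * b.den) • (0, 1)) = 0 := by
    rw [map_sub, map_zsmul, map_zsmul, zsmul_eq_mul, zsmul_eq_mul]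
    push_cast
    rw [mul_assoc, Rat.den_mul_eq_num, mul_assoc, Rat.den_mul_eq_num, mul_comm, sub_self]
  have := congrArg Prod.fst (hE (hrel.trans E.map_zero.symm))
  simp [hb] at this

theorem no_Z2_in_units_of_order_T2Q_general
    (Γ : Subring (Matrix (Fin 2) (Fin 2) ℚ))
    (htri : ∀ x ∈ Γ, x 1 0 = 0)
    (hfg : AddSubgroup.FG Γ.toAddSubgroup) :
    ¬ ∃ f : Multiplicative (ℤ × ℤ) →* Γˣ, Function.Injective f := by
  rintro ⟨f, hf⟩
  have hΓ (x) (hx : x ∈ Γ) : x.BlockTriangular id :=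
    Matrix.blockTriangular_id_iff_fin_two.mpr (htri x hx)
  have : Module.Finite ℤ Γ :=
    Module.Finite.iff_addGroup_fg.mpr ((AddGroup.fg_iff_addSubgroup_fg _).mpr hfg)
  let g : Multiplicative (ℤ × ℤ) →* Matrix (Fin 2) (Fin 2) ℚ :=
    (Γ.subtype.toMonoidHom.comp (Units.coeHom Γ)).comp (f.comp (powMonoidHom 2))
  have hg : Injective g := Subtype.val_injective.comp
    (Units.val_injective.comp (hf.comp (pow_left_injective two_ne_zero)))
  have hmem (z) : g z ∈ Matrix.upperUnitriangular (Fin 2) ℚ := by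
    have hgz : g z = ((f z : Γ) ^ 2 : Γ) := by simp [g]
    rw [hgz]
    exact ⟨hΓ _ ((f z : Γ) ^ 2).2,
      fun i => (Γ.diagEntryHom hΓ i).map_sq_eq_one_of_isUnit (f z).isUnit⟩
  let φ := Matrix.upperUnitriangular.upperRight.comp (g.codRestrict _ hmem)
  have hφ : Injective φ :=
    Matrix.upperUnitriangular.upperRight_injective.comp ((g.injective_codRestrict _ hmem).mpr hg)
  exact (AddMonoidHom.toMultiplicative.symm φ).not_injective_int_prod_rat hφ

/-- Every ℤ-order `Γ` in the algebra `T₂(ℚ)` of upper triangular 2×2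
rational matrices (a subring of `M₂(ℚ)` consisting of upper triangular matrices, finitely
generated as a ℤ-module, whose ℚ-span is exactly the set of upper triangular matrices)
has unit group containing no free abelian subgroup of rank two. -/
theorem no_Z2_in_units_of_order_T2Q
    (Γ : Subring (Matrix (Fin 2) (Fin 2) ℚ))
    (htri : ∀ x ∈ Γ, x 1 0 = 0)
    (hfg : AddSubgroup.FG Γ.toAddSubgroup)
    (hspan : ∀ X : Matrix (Fin 2) (Fin 2) ℚ,
      X ∈ Submodule.span ℚ (Γ : Set (Matrix (Fin 2) (Fin 2) ℚ)) ↔ X 1 0 = 0) :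
    ¬ ∃ f : Multiplicative (ℤ × ℤ) →* Γˣ, Function.Injective f :=
  no_Z2_in_units_of_order_T2Q_general Γ htri hfg
end

section
/- Let c₁, c₂ be negative rational numbers and let ℍ[ℚ, c₁, c₂] be the quaternion ℚ-algebra with generators i, j satisfying i² = c₁, j² = c₂, ij = -ji (a totally definite quaternion algebra over ℚ). Then every ℤ-order in ℍ[ℚ, c₁, c₂] has finite unit group; that is, every subring Γ ⊆ ℍ[ℚ, c₁, c₂] that is finitely generated as a ℤ-module and whose ℚ-span is all of ℍ[ℚ, c₁, c₂] satisfies that Γˣ is finite. -/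
/-!
The reduced norm `Q(x) = x x̄` is multiplicative and, since `c₁, c₂ < 0`, positive definite:
it dominates `ε` times the sum of the squared coordinates. A finitely generated subgroup `Γ`
has its coordinates in `N⁻¹ℤ` for some `N`, so `Q ≥ ε / N²` on `Γ \ {0}`. For a unit `u`,
`Q u = (Q u⁻¹)⁻¹ ≤ N² / ε`, so the units lie among the finitely many points of `N⁻¹ℤ⁴` in a ball.
-/

open Quaternion

section ZMultiples

variable {K : Type*}

lemma sq_le_sq_of_mem_zmultiples [Ring K] [LinearOrder K] [IsStrictOrderedRing K] {a q : K}
    (hq : q ∈ AddSubgroup.zmultiples a) (h0 : q ≠ 0) : a ^ 2 ≤ q ^ 2 := by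
  obtain ⟨n, rfl⟩ := AddSubgroup.mem_zmultiples_iff.mp hq
  have hn : (1 : K) ≤ (n : K) ^ 2 := by
    exact_mod_cast one_le_sq_iff_one_le_abs _ |>.mpr (Int.one_le_abs (by rintro rfl; simp at h0))
  rw [zsmul_eq_mul, (Int.cast_commute n a).mul_pow]
  exact le_mul_of_one_le_left (sq_nonneg a) hn

lemma finite_setOf_mem_zmultiples_sq_le [Field K] [LinearOrder K] [IsStrictOrderedRing K]
    [FloorRing K] {a : K} (ha : a ≠ 0) (R : K) :
    {q | q ∈ AddSubgroup.zmultiples a ∧ q ^ 2 ≤ R}.Finite := by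
  refine ((Set.finite_Icc (-⌈R / a ^ 2⌉) ⌈R / a ^ 2⌉).image (· • a)).subset ?_
  rintro _ ⟨hq, hR⟩
  obtain ⟨n, rfl⟩ := AddSubgroup.mem_zmultiples_iff.mp hq
  have hnR : ((n ^ 2 : ℤ) : K) ≤ R / a ^ 2 := by
    rw [le_div_iff₀ (by positivity)]
    simpa [zsmul_eq_mul, mul_pow] using hR
  have habs : |n| ≤ ⌈R / a ^ 2⌉ :=
    (Int.natAbs_le_self_sq n).trans' (Int.natCast_natAbs n).ge |>.trans
      (Int.cast_le.mp (hnR.trans (Int.le_ceil _)))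
  exact ⟨n, abs_le.mp habs, rfl⟩

variable {ι : Type*} [Fintype ι]

lemma sq_le_sum_sq_of_forall_mem_zmultiples [Ring K] [LinearOrder K] [IsStrictOrderedRing K]
    {a : K} {v : ι → K} (hv : ∀ i, v i ∈ AddSubgroup.zmultiples a) (h0 : v ≠ 0) :
    a ^ 2 ≤ ∑ i, v i ^ 2 := by
  obtain ⟨i, hi⟩ := Function.ne_iff.mp h0
  exact (sq_le_sq_of_mem_zmultiples (hv i) hi).trans
    (Finset.single_le_sum (fun j _ => sq_nonneg (v j)) (Finset.mem_univ i))

lemma finite_setOf_forall_mem_zmultiples_sum_sq_le [Field K] [LinearOrder K]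
    [IsStrictOrderedRing K] [FloorRing K] {a : K} (ha : a ≠ 0) (R : K) :
    {v : ι → K | (∀ i, v i ∈ AddSubgroup.zmultiples a) ∧ ∑ i, v i ^ 2 ≤ R}.Finite :=
  (Set.Finite.pi' fun _ => finite_setOf_mem_zmultiples_sq_le ha R).subset fun v ⟨hv, hR⟩ i =>
    ⟨hv i, (Finset.single_le_sum (fun j _ => sq_nonneg (v j)) (Finset.mem_univ i)).trans hR⟩

end ZMultiples

lemma Rat.mem_zmultiples_inv_of_den_dvd {q : ℚ} {N : ℕ} (hN : N ≠ 0) (h : q.den ∣ N) :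
    q ∈ AddSubgroup.zmultiples (N : ℚ)⁻¹ := by
  obtain ⟨t, rfl⟩ := h
  refine AddSubgroup.mem_zmultiples_iff.mpr ⟨q.num * t, ?_⟩
  have ht : (t : ℚ) ≠ 0 := by exact_mod_cast right_ne_zero_of_mul hN
  rw [zsmul_eq_mul]
  push_cast
  field_simp
  exact (Rat.den_mul_eq_num q).symm

lemma AddSubgroup.FG.exists_forall_mem_zmultiples_inv {V ι : Type*} [AddGroup V] [Fintype ι]
    {G : AddSubgroup V} (hG : G.FG) (f : V →+ ι → ℚ) :
    ∃ N : ℕ, 0 < N ∧ ∀ x ∈ G, ∀ i, f x i ∈ AddSubgroup.zmultiples (N : ℚ)⁻¹ := by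
  classical
  obtain ⟨S, rfl⟩ := hG
  set N := ∏ s ∈ S, ∏ i, (f s i).den
  have hN : 0 < N := Finset.prod_pos fun s _ => Finset.prod_pos fun i _ => (f s i).den_pos
  refine ⟨N, hN, fun x hx => ?_⟩
  have hle : closure (S : Set V) ≤
      (AddSubgroup.pi Set.univ fun _ => zmultiples (N : ℚ)⁻¹).comap f := by
    rw [closure_le]
    intro s hs
    simp only [SetLike.mem_coe, mem_comap, mem_pi, Set.mem_univ, true_implies]
    exact fun i => Rat.mem_zmultiples_inv_of_den_dvd hN.ne'
      ((Finset.dvd_prod_of_mem (fun i => (f s i).den) (Finset.mem_univ i)).trans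
        (Finset.dvd_prod_of_mem (fun s => ∏ i, (f s i).den) hs))
  exact fun i => (AddSubgroup.mem_pi _).1 (hle hx) i (Set.mem_univ i)

lemma MonoidHom.map_units_le_inv {M F : Type*} [Monoid M] [Field F] [LinearOrder F]
    [IsStrictOrderedRing F] (f : M →* F) {δ : F} (hδ : 0 < δ) (h : ∀ u : Mˣ, δ ≤ f u)
    (u : Mˣ) : f u ≤ δ⁻¹ := by
  have hinv : f u * f ↑u⁻¹ = 1 := by rw [← map_mul, Units.mul_inv, map_one]
  rw [eq_inv_of_mul_eq_one_left hinv]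
  exact inv_anti₀ hδ (h u⁻¹)

namespace QuaternionAlgebra

def reducedNorm {R : Type*} [CommRing R] {c₁ c₂ c₃ : R} : ℍ[R,c₁,c₂,c₃] →* R where
  toFun a := (a * star a).re
  map_one' := by simp
  map_mul' a b := by
    -- `b * star b` is a scalar, hence central
    rw [star_mul, ← mul_assoc, mul_assoc a, mul_star_eq_coe b, ← coe_commutes, mul_assoc,
      coe_mul_eq_smul, re_smul, re_coe, smul_eq_mul, mul_comm]

lemma reducedNorm_apply {R : Type*} [CommRing R] {c₁ c₂ : R} (x : ℍ[R,c₁,c₂]) :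
    reducedNorm x = x.re ^ 2 - c₁ * x.imI ^ 2 - c₂ * x.imJ ^ 2 + c₁ * c₂ * x.imK ^ 2 := by
  simp only [reducedNorm, MonoidHom.coe_mk, OneHom.coe_mk, re_mul, re_star, imI_star, imJ_star,
    imK_star, zero_mul, add_zero, mul_neg, neg_zero, sub_neg_eq_add]
  ring

lemma exists_pos_mul_sum_sq_le_reducedNorm {F : Type*} [Field F] [LinearOrder F]
    [IsStrictOrderedRing F] {c₁ c₂ : F} (hc₁ : c₁ < 0) (hc₂ : c₂ < 0) :
    ∃ ε > 0, ∀ x : ℍ[F,c₁,c₂], ε * ∑ i, linearEquivTuple c₁ 0 c₂ x i ^ 2 ≤ reducedNorm x := by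
  have hc : 0 < c₁ * c₂ := mul_pos_of_neg_of_neg hc₁ hc₂
  set ε := min (min 1 (-c₁)) (min (-c₂) (c₁ * c₂))
  refine ⟨ε, lt_min (lt_min one_pos (neg_pos.2 hc₁)) (lt_min (neg_pos.2 hc₂) hc), fun x => ?_⟩
  have h₀ : ε ≤ 1 := (min_le_left _ _).trans (min_le_left _ _)
  have h₁ : ε ≤ -c₁ := (min_le_left _ _).trans (min_le_right _ _)
  have h₂ : ε ≤ -c₂ := (min_le_right _ _).trans (min_le_left _ _)
  have h₃ : ε ≤ c₁ * c₂ := (min_le_right _ _).trans (min_le_right _ _)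
  simp only [reducedNorm_apply, coe_linearEquivTuple, equivTuple_apply, Fin.sum_univ_four,
    Fin.isValue, Matrix.cons_val_zero, Matrix.cons_val_one, Matrix.cons_val]
  nlinarith [mul_le_mul_of_nonneg_right h₀ (sq_nonneg x.re),
    mul_le_mul_of_nonneg_right h₁ (sq_nonneg x.imI),
    mul_le_mul_of_nonneg_right h₂ (sq_nonneg x.imJ),
    mul_le_mul_of_nonneg_right h₃ (sq_nonneg x.imK)]

end QuaternionAlgebra

open QuaternionAlgebra in
theorem finite_units_of_order_totally_definite_quaternion_general
    (c₁ c₂ : ℚ) (hc₁ : c₁ < 0) (hc₂ : c₂ < 0)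
    (Γ : Subring ℍ[ℚ, c₁, c₂])
    (hfg : AddSubgroup.FG Γ.toAddSubgroup) :
    Finite Γˣ := by
  set e := linearEquivTuple c₁ 0 c₂
  obtain ⟨N, hN, hΓ⟩ := hfg.exists_forall_mem_zmultiples_inv e.toLinearMap.toAddMonoidHom
  obtain ⟨ε, hε, hεQ⟩ := exists_pos_mul_sum_sq_le_reducedNorm hc₁ hc₂
  set Q : Γ →* ℚ := reducedNorm.comp Γ.subtype.toMonoidHom
  have hQ_ge : ∀ u : Γˣ, ε * ((N : ℚ)⁻¹) ^ 2 ≤ Q u := fun u =>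
    (mul_le_mul_of_nonneg_left
      (sq_le_sum_sq_of_forall_mem_zmultiples (hΓ _ (u : Γ).2) (by simp)) hε.le).trans (hεQ _)
  set S := {v : Fin 4 → ℚ | (∀ i, v i ∈ AddSubgroup.zmultiples (N : ℚ)⁻¹) ∧
    ∑ i, v i ^ 2 ≤ (ε * ((N : ℚ)⁻¹) ^ 2)⁻¹ / ε}
  have hS : ∀ u : Γˣ, e (u : Γ) ∈ S := fun u =>
    ⟨hΓ _ (u : Γ).2,
      (le_div_iff₀' hε).2 ((hεQ _).trans (Q.map_units_le_inv (by positivity) hQ_ge u))⟩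
  have : Finite S := (finite_setOf_forall_mem_zmultiples_sum_sq_le (by positivity) _).to_subtype
  exact Finite.of_injective (fun u : Γˣ => (⟨e (u : Γ), hS u⟩ : S)) fun u v h =>
    Units.ext (Subtype.ext (e.injective (congrArg Subtype.val h)))

/-- If `c₁, c₂` are negative rationals, then every ℤ-order in the totally
definite quaternion algebra `ℍ[ℚ, c₁, c₂]` has finite unit group. -/
theorem finite_units_of_order_totally_definite_quaternion
    (c₁ c₂ : ℚ) (hc₁ : c₁ < 0) (hc₂ : c₂ < 0)
    (Γ : Subring ℍ[ℚ, c₁, c₂])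
    (hfg : AddSubgroup.FG Γ.toAddSubgroup)
    (hspan : Submodule.span ℚ (Γ : Set ℍ[ℚ, c₁, c₂]) = ⊤) :
    Finite Γˣ :=
  finite_units_of_order_totally_definite_quaternion_general c₁ c₂ hc₁ hc₂ Γ hfg
end

section
/- Let C₅ be the cyclic group of order 5. Then the unit group of the integral group ring ℤC₅ is infinite, but contains no subgroup isomorphic to ℤ × ℤ; that is, there is no injective group homomorphism ℤ × ℤ → (ℤC₅)ˣ. -/
/-!
Sending the generator `t` of `C₅` to `1` and to a primitive fifth root of unity `ζ` embeds `ℤC₅`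
into `ℤ × ℤ[ζ]`: an element killed by both maps is represented by a polynomial of degree `< 5`
divisible by `Φ₅` and vanishing at `1`, hence zero. So a unit of `ℤC₅` mapping to `1` in `ℤ[ζ]`
squares to `1`, and a copy of `ℤ²` in `(ℤC₅)ˣ` would give one in `ℤ[ζ]ˣ`. But `ℚ(ζ)` has two
complex places and no real one, so by Dirichlet's unit theorem `ℤ[ζ]ˣ` has rank `1`.

The unit group is nevertheless infinite: `1 - t - t⁴` is a unit with inverse `1 - t² - t³`, and
under `t ↦ exp (4πi/5)` it becomes `1 - 2 cos (4π/5) > 1`, so it has infinite order.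
-/

open Polynomial NumberField

theorem Polynomial.eq_zero_of_cyclotomic_dvd_of_eval_one_eq_zero {R : Type*} [CommRing R]
    [IsDomain R] [CharZero R] {p : ℕ} [hp : Fact p.Prime] {f : R[X]} (hdeg : f.natDegree < p)
    (hdvd : cyclotomic p R ∣ f) (h1 : f.eval 1 = 0) : f = 0 := by
  obtain ⟨g, rfl⟩ := hdvd
  obtain rfl | hg := eq_or_ne g 0
  · rw [mul_zero]
  have hgdeg : g.natDegree = 0 := by
    rw [(cyclotomic.monic p R).natDegree_mul' hg, natDegree_cyclotomic,
      Nat.totient_prime hp.out] at hdeg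
    omega
  rw [eq_C_of_natDegree_eq_zero hgdeg, eval_mul, eval_C, eval_one_cyclotomic_prime,
    mul_eq_zero, Nat.cast_eq_zero] at h1
  rw [eq_C_of_natDegree_eq_zero hgdeg, h1.resolve_left hp.out.ne_zero, C_0, mul_zero]

theorem IsPrimitiveRoot.cyclotomic_dvd_of_aeval_eq_zero {K : Type*} [Field K] [CharZero K]
    {μ : K} {n : ℕ} (hμ : IsPrimitiveRoot μ n) (hn : 0 < n) {f : ℤ[X]} (hf : aeval μ f = 0) :
    cyclotomic n ℤ ∣ f := by
  rw [cyclotomic_eq_minpoly hμ hn]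
  exact minpoly.isIntegrallyClosed_dvd (hμ.isIntegral hn) hf

theorem MonoidHom.injective_comp_of_isOfFinOrder {A G H : Type*} [Group A] [IsMulTorsionFree A]
    [Monoid G] [Monoid H] {f : A →* G} (hf : Function.Injective f) {π : G →* H}
    (hπ : ∀ g, π g = 1 → IsOfFinOrder g) : Function.Injective (π.comp f) := by
  refine (injective_iff_map_eq_one _).mpr fun a ha => ?_
  rw [← isOfFinOrder_iff_eq_one, ← hf.isOfFinOrder_iff]
  exact hπ _ ha

theorem NumberField.Units.two_le_rank_of_injective {K : Type*} [Field K] [NumberField K]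
    {f : Multiplicative (ℤ × ℤ) →* (𝓞 K)ˣ} (hf : Function.Injective f) : 2 ≤ Units.rank K := by
  have := LinearMap.finrank_le_finrank_of_injective
    (f := (MonoidHom.toAdditiveRight f).toIntLinearMap) hf
  rwa [Units.finrank_eq, Module.finrank_prod, Module.finrank_self] at this

theorem IsCyclotomicExtension.Rat.units_rank (n : ℕ) [NeZero n] (K : Type*) [Field K]
    [NumberField K] [IsCyclotomicExtension {n} ℚ K] (hn : 2 < n) :
    Units.rank K = n.totient / 2 - 1 := by
  rw [Units.rank, InfinitePlace.card_eq_nrRealPlaces_add_nrComplexPlaces, nrRealPlaces_eq_zero K hn,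
    nrComplexPlaces_eq_totient_div_two n, zero_add]

namespace IntCyclicGroupRing

variable {n : ℕ}

theorem of_ofAdd_one_pow :
    MonoidAlgebra.of ℤ (Multiplicative (ZMod n)) (Multiplicative.ofAdd 1) ^ n = 1 := by
  rw [← map_pow, ← ofAdd_nsmul, nsmul_one, ZMod.natCast_self, ofAdd_zero, map_one]

variable [NeZero n]

def cyclicHom {M : Type*} [Monoid M] (ζ : M) (hζ : ζ ^ n = 1) : Multiplicative (ZMod n) →* M where
  toFun g := ζ ^ (Multiplicative.toAdd g).val
  map_one' := by simp
  map_mul' g h := by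
    rw [toAdd_mul, ZMod.val_add, ← pow_eq_pow_mod _ hζ, pow_add]

@[simp]
theorem cyclicHom_apply {M : Type*} [Monoid M] (ζ : M) (hζ : ζ ^ n = 1)
    (g : Multiplicative (ZMod n)) : cyclicHom ζ hζ g = ζ ^ (Multiplicative.toAdd g).val :=
  rfl

noncomputable def toPolynomial (a : MonoidAlgebra ℤ (Multiplicative (ZMod n))) : ℤ[X] :=
  ∑ g, monomial (Multiplicative.toAdd g).val (a.coeff g)

theorem natDegree_toPolynomial_lt (a : MonoidAlgebra ℤ (Multiplicative (ZMod n))) :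
    (toPolynomial a).natDegree < n := by
  refine Nat.lt_of_le_pred (Nat.pos_of_neZero n)
    (natDegree_sum_le_of_forall_le _ _ fun g _ => ?_)
  exact (natDegree_monomial_le _).trans (Nat.le_pred_of_lt (ZMod.val_lt _))

theorem aeval_toPolynomial {S : Type*} [CommRing S] [Algebra ℤ S] (ζ : S) (hζ : ζ ^ n = 1)
    (a : MonoidAlgebra ℤ (Multiplicative (ZMod n))) :
    aeval ζ (toPolynomial a) = MonoidAlgebra.lift ℤ S _ (cyclicHom ζ hζ) a := by
  rw [MonoidAlgebra.lift_apply', Finsupp.sum_fintype _ _ fun _ => by rw [map_zero, zero_mul],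
    toPolynomial, map_sum]
  simp [aeval_monomial]

theorem aeval_of_toPolynomial (a : MonoidAlgebra ℤ (Multiplicative (ZMod n))) :
    aeval (MonoidAlgebra.of ℤ _ (Multiplicative.ofAdd 1)) (toPolynomial a) = a := by
  have hof : cyclicHom _ of_ofAdd_one_pow = MonoidAlgebra.of ℤ (Multiplicative (ZMod n)) := by
    ext g
    simp [← ofAdd_nsmul]
  rw [aeval_toPolynomial _ of_ofAdd_one_pow, hof]
  exact congrArg (· a) ((MonoidAlgebra.lift ℤ _ _).apply_symm_apply (AlgHom.id ℤ _))

variable {p : ℕ} [hp : Fact p.Prime]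

theorem eq_zero_of_eval_one_eq_zero_of_aeval_eq_zero {K : Type*} [Field K] [CharZero K] {ζ : K}
    (hζ : IsPrimitiveRoot ζ p) {a : MonoidAlgebra ℤ (Multiplicative (ZMod p))}
    (h1 : (toPolynomial a).eval 1 = 0) (hζa : aeval ζ (toPolynomial a) = 0) : a = 0 := by
  rw [← aeval_of_toPolynomial a, eq_zero_of_cyclotomic_dvd_of_eval_one_eq_zero
    (natDegree_toPolynomial_lt a) (hζ.cyclotomic_dvd_of_aeval_eq_zero hp.out.pos hζa) h1, map_zero]

noncomputable def evalZeta {K : Type*} [Field K] {ζ : K} (hζ : IsPrimitiveRoot ζ p) :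
    MonoidAlgebra ℤ (Multiplicative (ZMod p)) →ₐ[ℤ] 𝓞 K :=
  MonoidAlgebra.lift ℤ (𝓞 K) _ (cyclicHom hζ.toInteger hζ.toInteger_isPrimitiveRoot.pow_eq_one)

theorem sq_eq_one_of_unitsMap_evalZeta_eq_one {K : Type*} [Field K] [CharZero K] {ζ : K}
    (hζ : IsPrimitiveRoot ζ p) {u : (MonoidAlgebra ℤ (Multiplicative (ZMod p)))ˣ}
    (hu : Units.map (evalZeta hζ).toMonoidHom u = 1) : u ^ 2 = 1 := by
  have hθ : evalZeta hζ u = 1 := congrArg Units.val hu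
  rw [Units.ext_iff, Units.val_pow_eq_pow_val, Units.val_one, ← sub_eq_zero]
  refine eq_zero_of_eval_one_eq_zero_of_aeval_eq_zero hζ ?_ ?_
  · rw [← coe_aeval_eq_eval, aeval_toPolynomial 1 (one_pow p), map_sub, map_pow, map_one,
      Int.isUnit_sq (u.isUnit.map _), sub_self]
  · rw [show ζ = algebraMap (𝓞 K) K hζ.toInteger from rfl, aeval_algebraMap_apply,
      aeval_toPolynomial _ hζ.toInteger_isPrimitiveRoot.pow_eq_one]
    change algebraMap (𝓞 K) K (evalZeta hζ _) = 0
    rw [map_sub, map_pow, map_one, hθ, one_pow, sub_self, map_zero]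

theorem two_le_units_rank_of_injective {K : Type*} [Field K] [NumberField K] {ζ : K}
    (hζ : IsPrimitiveRoot ζ p)
    {f : Multiplicative (ℤ × ℤ) →* (MonoidAlgebra ℤ (Multiplicative (ZMod p)))ˣ}
    (hf : Function.Injective f) : 2 ≤ Units.rank K :=
  Units.two_le_rank_of_injective <| MonoidHom.injective_comp_of_isOfFinOrder hf fun _ hu =>
    isOfFinOrder_iff_pow_eq_one.mpr ⟨2, two_pos, sq_eq_one_of_unitsMap_evalZeta_eq_one hζ hu⟩

end IntCyclicGroupRing

def unitOfPowFive {R : Type*} [CommRing R] (t : R) (ht : t ^ 5 = 1) : Rˣ where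
  val := 1 - t - t ^ 4
  inv := 1 - t ^ 2 - t ^ 3
  val_inv := by linear_combination (t + t ^ 2) * ht
  inv_val := by linear_combination (t + t ^ 2) * ht

theorem infinite_units_of_norm_ne_one {M : Type*} [Monoid M] (φ : M →* ℂ) (u : Mˣ)
    (hu : ‖φ u‖ ≠ 1) : Infinite Mˣ := by
  by_contra h
  rw [not_infinite_iff_finite] at h
  obtain ⟨n, hn, hun⟩ := isOfFinOrder_iff_pow_eq_one.mp (isOfFinOrder_of_finite u)
  refine hu (Complex.norm_eq_one_of_pow_eq_one ?_ hn.ne')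
  rw [← map_pow, ← Units.val_pow_eq_pow_val, hun, Units.val_one, map_one]

theorem Complex.one_sub_exp_sub_exp_neg (x : ℝ) :
    1 - exp (x * I) - exp (-x * I) = ((1 - 2 * Real.cos x : ℝ) : ℂ) := by
  rw [sub_sub, ← two_cos, ← ofReal_cos]
  push_cast
  ring

open IntCyclicGroupRing Complex in
theorem infinite_units_intCyclicGroupRing_five :
    Infinite (MonoidAlgebra ℤ (Multiplicative (ZMod 5)))ˣ := by
  set x : ℝ := 4 * Real.pi / 5
  have hw : exp (x * I) ^ 5 = 1 := by
    rw [← exp_nat_mul, exp_eq_one_iff]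
    exact ⟨2, by push_cast [x]; ring⟩
  have hw4 : exp (x * I) ^ 4 = exp (-x * I) := by
    rw [← exp_nat_mul, exp_eq_exp_iff_exists_int]
    exact ⟨2, by push_cast [x]; ring⟩
  refine infinite_units_of_norm_ne_one
    (MonoidAlgebra.lift ℤ ℂ _ (cyclicHom _ hw)) (unitOfPowFive _ of_ofAdd_one_pow) ?_
  change ‖MonoidAlgebra.lift ℤ ℂ _ (cyclicHom _ hw) (1 - _ - _ ^ 4)‖ ≠ 1
  rw [map_sub, map_sub, map_one, map_pow, MonoidAlgebra.lift_of, cyclicHom_apply, toAdd_ofAdd,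
    ZMod.val_one'' (by norm_num), pow_one, hw4, one_sub_exp_sub_exp_neg, norm_real]
  have hcos : Real.cos x < 0 :=
    Real.cos_neg_of_pi_div_two_lt_of_lt (by simp only [x]; linarith [Real.pi_pos])
      (by simp only [x]; linarith [Real.pi_pos])
  rw [Real.norm_of_nonneg (by linarith)]
  linarith

/-- **Statement.** The unit group of the integral group ring of the cyclic group of
order 5 is infinite, but contains no free abelian subgroup of rank two. -/
theorem units_int_group_ring_C5
    : Infinite (MonoidAlgebra ℤ (Multiplicative (ZMod 5)))ˣ ∧
      ¬ ∃ f : Multiplicative (ℤ × ℤ) →* (MonoidAlgebra ℤ (Multiplicative (ZMod 5)))ˣ,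
        Function.Injective f := by
  refine ⟨infinite_units_intCyclicGroupRing_five, fun ⟨f, hf⟩ => ?_⟩
  have : Fact (Nat.Prime 5) := ⟨Nat.prime_five⟩
  have : IsCyclotomicExtension {5} ℚ (CyclotomicField 5 ℚ) :=
    CyclotomicField.isCyclotomicExtension 5 ℚ
  have hrank := IntCyclicGroupRing.two_le_units_rank_of_injective
    (IsCyclotomicExtension.zeta_spec 5 ℚ (CyclotomicField 5 ℚ)) hf
  rw [IsCyclotomicExtension.Rat.units_rank 5 _ (by norm_num), Nat.totient_prime Nat.prime_five]
    at hrank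
  norm_num at hrank
end

section
/- Let C₈ be the cyclic group of order 8. Then the unit group of the integral group ring ℤC₈ is infinite, but contains no subgroup isomorphic to ℤ × ℤ; that is, there is no injective group homomorphism ℤ × ℤ → (ℤC₈)ˣ. -/
/-!
The characters of `C₈` send a generator `g` to primitive `d`-th roots of unity, `d ∣ 8`, and since
`X⁸ - 1 = Φ₁ Φ₂ Φ₄ Φ₈` with pairwise coprime cyclotomic factors, an element of `ℤC₈` killed by one
character of each order is zero. Hence `ℤC₈` embeds into `ℤ × ℤ × ℤ[ζ₄] × ℤ[ζ₈]`, and its units into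
`ℤˣ × ℤˣ × ℤ[ζ₄]ˣ × ℤ[ζ₈]ˣ`. By Dirichlet's unit theorem `ℤ[ζ₄]ˣ` is finite and `ℤ[ζ₈]ˣ` has rank
`φ(8)/2 - 1 = 1`, so the units of `ℤC₈` map to a group of rank one with torsion kernel, which leaves
no room for `ℤ²`. On the other hand the Bass unit `(1 + g + g²)² - ∑ gⁱ` has absolute value
`3 + 2√2` under `g ↦ e^{2πi/8}`, so it has infinite order.
-/

open Polynomial

noncomputable section

theorem not_injective_of_finrank_lt {A G H : Type*} [AddCommGroup A] [IsAddTorsionFree A]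
    [Group G] [CommGroup H] [Module.Finite ℤ (Additive H)]
    (hrank : Module.finrank ℤ (Additive H) < Module.finrank ℤ A) (φ : G →* H)
    (hφ : ∀ g ∈ φ.ker, IsOfFinOrder g) (f : Multiplicative A →* G) : ¬ Function.Injective f := by
  intro hf
  let ψ : A →ₗ[ℤ] Additive H := (φ.comp f).toAdditiveRight.toIntLinearMap
  have hψ : Function.Injective ψ := by
    refine (injective_iff_map_eq_zero ψ).2 fun x hx => ?_
    have hfin : IsOfFinOrder (f (.ofAdd x)) := hφ _ (Additive.ofMul.injective hx)
    rwa [hf.isOfFinOrder_iff, isOfFinOrder_iff_eq_one] at hfin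
  exact hrank.not_ge (LinearMap.finrank_le_finrank_of_injective hψ)

theorem not_isOfFinOrder_of_one_lt_norm {R 𝕜 : Type*} [Ring R] [NormedDivisionRing 𝕜]
    (χ : R →+* 𝕜) {u : Rˣ} (hu : 1 < ‖χ u‖) : ¬ IsOfFinOrder u := by
  rintro ⟨k, hk, hperiodic⟩
  have hpow : ‖χ u‖ ^ k = 1 := by
    rw [← norm_pow, ← map_pow, ← Units.val_pow_eq_pow_val,
      (isPeriodicPt_mul_iff_pow_eq_one u).1 hperiodic, Units.val_one, map_one, norm_one]
  exact hu.ne' ((pow_eq_one_iff_of_nonneg (norm_nonneg _) hk.ne').1 hpow)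

namespace NumberField.Units

variable {K : Type*} [Field K] [NumberField K]

theorem rank_of_isCyclotomicExtension (n : ℕ) [NeZero n] [IsCyclotomicExtension {n} ℚ K]
    (hn : 2 < n) : rank K = n.totient / 2 - 1 := by
  rw [rank, InfinitePlace.card_eq_nrRealPlaces_add_nrComplexPlaces,
    IsCyclotomicExtension.Rat.nrRealPlaces_eq_zero K hn,
    IsCyclotomicExtension.Rat.nrComplexPlaces_eq_totient_div_two n, zero_add]

theorem mem_torsion_of_rank_eq_zero (h : rank K = 0) (u : (𝓞 K)ˣ) : u ∈ torsion K := by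
  obtain ⟨⟨ζ, _⟩, rfl, -⟩ := exist_unique_eq_mul_prod K u
  have : IsEmpty (Fin (rank K)) := by rw [h]; infer_instance
  simp

end NumberField.Units

-- Instance search does not find `CyclotomicField.isCyclotomicExtension` here: the `ℚ`-algebra
-- structure it picks (`DivisionRing.toRatAlgebra`) is not reducibly the one that instance uses.
instance (d : ℕ) [NeZero d] : IsCyclotomicExtension {d} ℚ (CyclotomicField d ℚ) :=
  CyclotomicField.isCyclotomicExtension d ℚ

abbrev CyclicGroupRing (n : ℕ) := MonoidAlgebra ℤ (Multiplicative (ZMod n))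

namespace CyclicGroupRing

open NumberField NumberField.Units

variable {n : ℕ}

variable (n) in
def gen : CyclicGroupRing n := MonoidAlgebra.of ℤ _ (Multiplicative.ofAdd 1)

lemma gen_pow (k : ℕ) :
    gen n ^ k = MonoidAlgebra.of ℤ _ (Multiplicative.ofAdd (k : ZMod n)) := by
  rw [gen, ← map_pow, ← ofAdd_nsmul, nsmul_one]

lemma gen_pow_self : gen n ^ n = 1 := by
  rw [gen_pow, ZMod.natCast_self, ofAdd_zero, map_one]

variable [NeZero n]

lemma aeval_gen_surjective :
    Function.Surjective (aeval (gen n) : ℤ[X] →ₐ[ℤ] CyclicGroupRing n) := by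
  rw [← AlgHom.range_eq_top, ← Algebra.adjoin_singleton_eq_range_aeval, eq_top_iff]
  rintro a -
  induction a using MonoidAlgebra.induction_on with
  | of g =>
    rw [← ofAdd_toAdd g, ← ZMod.natCast_zmod_val (Multiplicative.toAdd g), ← gen_pow]
    exact Subalgebra.pow_mem _ (Algebra.self_mem_adjoin_singleton ℤ _) _
  | add x y hx hy => exact add_mem hx hy
  | smul r x hx => exact Subalgebra.smul_mem _ hx r

def evalRoot {S : Type*} [CommRing S] {s : S} (hs : s ^ n = 1) : CyclicGroupRing n →+* S :=
  (MonoidAlgebra.lift ℤ S _ (AddChar.zmodChar n hs).toMonoidHom).toRingHom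

@[simp]
lemma evalRoot_gen {S : Type*} [CommRing S] {s : S} (hs : s ^ n = 1) :
    evalRoot hs (gen n) = s := by
  simpa [evalRoot, gen] using AddChar.zmodChar_apply' hs 1

theorem eq_zero_of_forall_isPrimitiveRoot {L : Type*} [Field L] [CharZero L]
    {a : CyclicGroupRing n}
    (h : ∀ d ∈ n.divisors,
      ∃ χ : CyclicGroupRing n →+* L, IsPrimitiveRoot (χ (gen n)) d ∧ χ a = 0) :
    a = 0 := by
  obtain ⟨p, rfl⟩ := aeval_gen_surjective a
  have hdvd : ∀ d ∈ n.divisors, cyclotomic d ℚ ∣ p.map (Int.castRingHom ℚ) := by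
    intro d hd
    obtain ⟨χ, hprim, hχ⟩ := h d hd
    rw [cyclotomic_eq_minpoly_rat hprim (Nat.pos_of_mem_divisors hd)]
    apply minpoly.dvd
    rw [← algebraMap_int_eq, aeval_map_algebraMap]
    exact (aeval_algHom_apply χ.toIntAlgHom (gen n) p).trans hχ
  have hcop : (n.divisors : Set ℕ).Pairwise (Function.onFun IsCoprime (cyclotomic · ℚ)) :=
    fun _ _ _ _ hne => cyclotomic.isCoprime_rat hne
  have hmap := Finset.prod_dvd_of_coprime hcop hdvd
  rw [prod_cyclotomic_eq_X_pow_sub_one (NeZero.pos n)] at hmap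
  have hmonic : (X ^ n - 1 : ℤ[X]).Monic := by
    simpa using monic_X_pow_sub_C (1 : ℤ) (NeZero.ne n)
  obtain ⟨q, rfl⟩ : (X ^ n - 1 : ℤ[X]) ∣ p := by
    rw [← map_dvd_map (Int.castRingHom ℚ) Int.cast_injective hmonic]
    simpa using hmap
  simp [gen_pow_self]

def evalZeta (d : ℕ) [NeZero d] (hd : d ∣ n) : CyclicGroupRing n →+* 𝓞 (CyclotomicField d ℚ) :=
  evalRoot (((IsCyclotomicExtension.zeta_spec d ℚ _).toInteger_isPrimitiveRoot.pow_eq_one_iff_dvd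
    n).2 hd)

lemma isPrimitiveRoot_evalZeta_gen {L : Type*} [Field L] {d : ℕ} [NeZero d] (hd : d ∣ n)
    (σ : CyclotomicField d ℚ →+* L) :
    IsPrimitiveRoot ((σ.comp ((algebraMap _ _).comp (evalZeta d hd))) (gen n)) d := by
  simp only [RingHom.comp_apply, evalZeta, evalRoot_gen]
  exact (IsCyclotomicExtension.zeta_spec d ℚ _).map_of_injective σ.injective

local notation "K₄" => CyclotomicField 4 ℚ
local notation "K₈" => CyclotomicField 8 ℚ

def unitsEval : (CyclicGroupRing 8)ˣ →* ℤˣ × ℤˣ × (𝓞 K₄)ˣ × (𝓞 K₈)ˣ :=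
  (Units.map (evalRoot (s := (1 : ℤ)) (one_pow 8)).toMonoidHom).prod <|
    (Units.map (evalRoot (s := (-1 : ℤ)) (by norm_num)).toMonoidHom).prod <|
      (Units.map (evalZeta 4 (by norm_num)).toMonoidHom).prod
        (Units.map (evalZeta 8 dvd_rfl).toMonoidHom)

lemma unitsEval_injective : Function.Injective unitsEval := by
  intro u v h
  simp only [unitsEval, MonoidHom.prod_apply, Prod.mk.injEq, Units.ext_iff, Units.coe_map] at h
  obtain ⟨h₁, h₂, h₄, h₈⟩ := h
  refine Units.ext (sub_eq_zero.1 (eq_zero_of_forall_isPrimitiveRoot (L := ℂ) fun d hd => ?_))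
  obtain ⟨σ₄⟩ : Nonempty (K₄ →+* ℂ) := inferInstance
  obtain ⟨σ₈⟩ : Nonempty (K₈ →+* ℂ) := inferInstance
  obtain rfl | rfl | rfl | rfl : d = 1 ∨ d = 2 ∨ d = 4 ∨ d = 8 := by
    simpa [show Nat.divisors 8 = {1, 2, 4, 8} from rfl] using hd
  · refine ⟨(Int.castRingHom ℂ).comp (evalRoot (s := (1 : ℤ)) (one_pow 8)), by simp, ?_⟩
    simpa [sub_eq_zero] using congrArg (Int.cast : ℤ → ℂ) h₁
  · refine ⟨(Int.castRingHom ℂ).comp (evalRoot (s := (-1 : ℤ)) (by norm_num)),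
      by simpa using IsPrimitiveRoot.neg_one 0 (by norm_num), ?_⟩
    simpa [sub_eq_zero] using congrArg (Int.cast : ℤ → ℂ) h₂
  · refine ⟨_, isPrimitiveRoot_evalZeta_gen (by norm_num) σ₄, ?_⟩
    simpa [sub_eq_zero] using congrArg (σ₄ ∘ algebraMap _ _) h₄
  · refine ⟨_, isPrimitiveRoot_evalZeta_gen dvd_rfl σ₈, ?_⟩
    simpa [sub_eq_zero] using congrArg (σ₈ ∘ algebraMap _ _) h₈

lemma rank_cyclotomicField_four : rank K₄ = 0 := by
  rw [rank_of_isCyclotomicExtension 4 (by norm_num)]; decide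

lemma rank_cyclotomicField_eight : rank K₈ = 1 := by
  rw [rank_of_isCyclotomicExtension 8 (by norm_num)]; decide

def unitsToModTorsion : (CyclicGroupRing 8)ˣ →* (𝓞 K₈)ˣ ⧸ torsion K₈ :=
  (QuotientGroup.mk' (torsion K₈)).comp (Units.map (evalZeta 8 dvd_rfl).toMonoidHom)

lemma isOfFinOrder_of_mem_ker_unitsToModTorsion {u : (CyclicGroupRing 8)ˣ}
    (hu : u ∈ unitsToModTorsion.ker) : IsOfFinOrder u := by
  rw [← unitsEval_injective.isOfFinOrder_iff]
  refine (isOfFinOrder_of_finite _).prod_mk <| (isOfFinOrder_of_finite _).prod_mk <|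
    IsOfFinOrder.prod_mk ?_ ?_
  · exact (CommGroup.mem_torsion _).1 (mem_torsion_of_rank_eq_zero rank_cyclotomicField_four _)
  · exact (CommGroup.mem_torsion _).1 ((QuotientGroup.eq_one_iff _).1 hu)

-- `(1 + g + g²)² - ∑ᵢ gⁱ`, the Bass unit attached to `3² ≡ 1 [MOD 8]`.
def bassUnit : (CyclicGroupRing 8)ˣ where
  val := gen 8 + 2 * gen 8 ^ 2 + gen 8 ^ 3 - gen 8 ^ 5 - gen 8 ^ 6 - gen 8 ^ 7
  inv := gen 8 - gen 8 ^ 2 + gen 8 ^ 3 - gen 8 ^ 5 + 2 * gen 8 ^ 6 - gen 8 ^ 7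
  val_inv := by
    linear_combination (1 - gen 8 ^ 2 - gen 8 ^ 3 - gen 8 ^ 5 + gen 8 ^ 6) *
      (gen_pow_self : gen 8 ^ 8 = 1)
  inv_val := by
    linear_combination (1 - gen 8 ^ 2 - gen 8 ^ 3 - gen 8 ^ 5 + gen 8 ^ 6) *
      (gen_pow_self : gen 8 ^ 8 = 1)

open Complex in
lemma not_isOfFinOrder_bassUnit : ¬ IsOfFinOrder bassUnit := by
  set z : ℂ := (√2 / 2 : ℝ) * (1 + I)
  have hsqrt : ((√2 : ℝ) : ℂ) ^ 2 = 2 := by exact_mod_cast Real.sq_sqrt zero_le_two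
  have hz2 : z ^ 2 = I := by
    simp only [z]; push_cast
    linear_combination (1 + 2 * I + I ^ 2) / 4 * hsqrt + 1 / 2 * I_sq
  have hz4 : z ^ 4 = -1 := by rw [show z ^ 4 = (z ^ 2) ^ 2 by ring, hz2, I_sq]
  have hz8 : z ^ 8 = 1 := by rw [show z ^ 8 = (z ^ 4) ^ 2 by ring, hz4]; norm_num
  have hval : evalRoot hz8 bassUnit = ((3 + 2 * √2 : ℝ) : ℂ) * I := calc
    evalRoot hz8 bassUnit = z + 2 * z ^ 2 + z ^ 3 - z ^ 5 - z ^ 6 - z ^ 7 := by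
      simp [bassUnit, map_ofNat]
    _ = 2 * z * (1 + z ^ 2) + 3 * z ^ 2 := by linear_combination (-(z + z ^ 2 + z ^ 3)) * hz4
    _ = ((3 + 2 * √2 : ℝ) : ℂ) * I := by
      rw [hz2]; simp only [z]; push_cast
      linear_combination (√2 : ℂ) * I_sq
  refine not_isOfFinOrder_of_one_lt_norm (evalRoot hz8) ?_
  rw [hval, norm_mul, norm_I, mul_one, norm_real, Real.norm_of_nonneg (by positivity)]
  linarith [Real.sqrt_nonneg 2]

end CyclicGroupRing

end

/-- **Statement.** The unit group of the integral group ring of the cyclic group of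
order 8 is infinite, but contains no free abelian subgroup of rank two. -/
theorem units_int_group_ring_C8
    : Infinite (MonoidAlgebra ℤ (Multiplicative (ZMod 8)))ˣ ∧
      ¬ ∃ f : Multiplicative (ℤ × ℤ) →* (MonoidAlgebra ℤ (Multiplicative (ZMod 8)))ˣ,
        Function.Injective f := by
  refine ⟨Infinite.of_injective _
    (injective_pow_iff_not_isOfFinOrder.2 CyclicGroupRing.not_isOfFinOrder_bassUnit),
    fun ⟨f, hf⟩ => ?_⟩
  exact not_injective_of_finrank_lt
    ((NumberField.Units.finrank_modTorsion _).trans_lt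
      (by simp [CyclicGroupRing.rank_cyclotomicField_eight]))
    CyclicGroupRing.unitsToModTorsion
    (fun _ => CyclicGroupRing.isOfFinOrder_of_mem_ker_unitsToModTorsion) f hf
end

section
/- Let A be a finite-dimensional ℚ-algebra and let Γ₁ and Γ₂ be two ℤ-orders in A, i.e., subrings of A that are finitely generated as ℤ-modules and whose ℚ-spans equal A. If there is an injective group homomorphism ℤ × ℤ → Γ₁ˣ, then there is an injective group homomorphism ℤ × ℤ → Γ₂ˣ. -/
/-! Since `Γ₁` is finitely generated and `Γ₂` spans `A` over `ℚ`, some `N ≠ 0` satisfies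
`N • Γ₁ ⊆ Γ₂`. A unit of `Γ₁` that is `1` modulo `N` lies, together with its inverse, in
`1 + N • Γ₁ ⊆ Γ₂`, so this congruence subgroup embeds into `Γ₂ˣ`. It is the kernel of the map to
the finite group `(Γ₁ ⧸ N)ˣ`, so the `n`-th power map, `n` the order of that group, carries the
torsion-free group `ℤ × ℤ` injectively from `Γ₁ˣ` into it. -/

open Function

theorem AddSubgroup.exists_nsmul_mem_of_fg_of_span_rat_eq_top {V : Type*} [AddCommGroup V]
    [Module ℚ V] {L₁ L₂ : AddSubgroup V} (h₁ : L₁.FG)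
    (h₂ : Submodule.span ℚ (L₂ : Set V) = ⊤) :
    ∃ N : ℕ, N ≠ 0 ∧ ∀ x ∈ L₁, N • x ∈ L₂ := by
  have : AddGroup.FG L₁ := (AddGroup.fg_iff_addSubgroup_fg L₁).2 h₁
  have htorsion : IsAddTorsion (L₁ ⧸ L₂.addSubgroupOf L₁) := by
    intro q
    obtain ⟨x, rfl⟩ := QuotientAddGroup.mk_surjective q
    obtain ⟨t, ht⟩ := multiple_mem_span_of_mem_localization_span (nonZeroDivisors ℤ) ℚ
      (L₂ : Set V) x (h₂ ▸ Submodule.mem_top)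
    have ht' : (t : ℤ) • (x : V) ∈ L₂ :=
      (Submodule.span_le (p := L₂.toIntSubmodule)).2 subset_rfl ht
    refine isOfFinAddOrder_iff_zsmul_eq_zero.2 ⟨t, nonZeroDivisors.coe_ne_zero t, ?_⟩
    rw [← QuotientAddGroup.mk_zsmul, QuotientAddGroup.eq_zero_iff, AddSubgroup.mem_addSubgroupOf]
    exact ht'
  have : Finite (L₁ ⧸ L₂.addSubgroupOf L₁) :=
    AddCommGroup.finite_of_fg_isAddTorsion _ htorsion
  refine ⟨(L₂.addSubgroupOf L₁).index, AddSubgroup.index_ne_zero_of_finite, fun x hx => ?_⟩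
  simpa [AddSubgroup.mem_addSubgroupOf] using (L₂.addSubgroupOf L₁).nsmul_index_mem ⟨x, hx⟩

instance Ideal.isTwoSided_span_natCast (R : Type*) [Ring R] (n : ℕ) :
    (Ideal.span {(n : R)}).IsTwoSided :=
  ⟨fun b ha => by
    obtain ⟨c, rfl⟩ := Ideal.mem_span_singleton'.mp ha
    refine Ideal.mem_span_singleton'.mpr ⟨c * b, ?_⟩
    rw [mul_assoc, mul_assoc, (Nat.cast_commute n b).eq]⟩

theorem Ideal.finite_quotient_span_natCast (R : Type*) [Ring R] [AddGroup.FG R] {N : ℕ}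
    (hN : N ≠ 0) : Finite (R ⧸ Ideal.span {(N : R)}) := by
  have : AddGroup.FG (R ⧸ Ideal.span {(N : R)}) :=
    AddGroup.fg_of_surjective (f := (Ideal.Quotient.mk _).toAddMonoidHom)
      Ideal.Quotient.mk_surjective
  refine AddCommGroup.finite_of_fg_isAddTorsion _ fun q => ?_
  obtain ⟨x, rfl⟩ := Ideal.Quotient.mk_surjective q
  refine isOfFinAddOrder_iff_nsmul_eq_zero.2 ⟨N, Nat.pos_of_ne_zero hN, ?_⟩
  rw [← map_nsmul, Ideal.Quotient.eq_zero_iff_mem, nsmul_eq_mul']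
  exact Ideal.mul_mem_left _ _ (Ideal.subset_span rfl)

theorem MonoidHom.exists_injective_into_ker_of_finite {M G Q : Type*} [CommGroup M]
    [IsMulTorsionFree M] [Group G] [Group Q] [Finite Q] (f : M →* G) (hf : Injective f) (φ : G →* Q) :
    ∃ g : M →* φ.ker, Injective g := by
  have hQ : Nat.card Q ≠ 0 := Nat.card_pos.ne'
  refine ⟨(f.comp (powMonoidHom (Nat.card Q))).codRestrict φ.ker fun x => ?_,
    fun x y hxy => ?_⟩
  · simp [MonoidHom.mem_ker, pow_card_eq_one']
  · exact pow_left_injective hQ (hf (congrArg Subtype.val hxy))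

theorem Subring.exists_injective_units_of_ker_units_map_quotient {A : Type*} [Ring A]
    {Γ₁ Γ₂ : Subring A} (I : Ideal Γ₁) [I.IsTwoSided] (hI : ∀ x ∈ I, (x : A) ∈ Γ₂) :
    ∃ g : (Units.map (Ideal.Quotient.mk I : Γ₁ →* Γ₁ ⧸ I)).ker →* Γ₂ˣ, Injective g := by
  have hmem : ∀ u : (Units.map (Ideal.Quotient.mk I : Γ₁ →* Γ₁ ⧸ I)).ker,
      (((u : Γ₁ˣ) : Γ₁) : A) ∈ Γ₂ := by
    rintro ⟨u, hu⟩
    have : (u : Γ₁) - 1 ∈ I := by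
      rw [← Ideal.Quotient.eq]
      simpa [Units.ext_iff] using hu
    simpa using Γ₂.add_mem (hI _ this) Γ₂.one_mem
  let g : (Units.map (Ideal.Quotient.mk I : Γ₁ →* Γ₁ ⧸ I)).ker →* Γ₂ :=
    { toFun u := ⟨_, hmem u⟩
      map_one' := rfl
      map_mul' _ _ := rfl }
  refine ⟨g.toHomUnits, fun u v huv => ?_⟩
  have := congrArg (fun w : Γ₂ˣ => ((w : Γ₂) : A)) huv
  exact Subtype.ext (Units.ext (Subtype.ext this))

theorem Z2_in_units_order_independent_general
    (A : Type*) [Ring A] [Algebra ℚ A]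
    (Γ₁ Γ₂ : Subring A)
    (hfg₁ : AddSubgroup.FG Γ₁.toAddSubgroup)
    (hspan₂ : Submodule.span ℚ (Γ₂ : Set A) = ⊤)
    (h : ∃ f : Multiplicative (ℤ × ℤ) →* Γ₁ˣ, Function.Injective f) :
    ∃ f : Multiplicative (ℤ × ℤ) →* Γ₂ˣ, Function.Injective f := by
  obtain ⟨f, hf⟩ := h
  obtain ⟨N, hN, hNΓ⟩ :=
    AddSubgroup.exists_nsmul_mem_of_fg_of_span_rat_eq_top (L₂ := Γ₂.toAddSubgroup) hfg₁ hspan₂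
  let I := Ideal.span {(N : Γ₁)}
  have : AddGroup.FG Γ₁ := (AddGroup.fg_iff_addSubgroup_fg _).2 hfg₁
  have : Finite (Γ₁ ⧸ I) := Ideal.finite_quotient_span_natCast Γ₁ hN
  obtain ⟨g, hg⟩ :=
    f.exists_injective_into_ker_of_finite hf (Units.map (Ideal.Quotient.mk I : Γ₁ →* Γ₁ ⧸ I))
  have hI : ∀ x ∈ I, (x : A) ∈ Γ₂ := fun x hx => by
    obtain ⟨a, rfl⟩ := Ideal.mem_span_singleton'.mp hx
    simpa [← nsmul_eq_mul'] using hNΓ a a.2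
  obtain ⟨e, he⟩ := Subring.exists_injective_units_of_ker_units_map_quotient I hI
  exact ⟨e.comp g, he.comp hg⟩

/-- Let `A` be a finite-dimensional ℚ-algebra and `Γ₁, Γ₂` two ℤ-orders
in `A`. If `ℤ × ℤ` embeds into `Γ₁ˣ`, then `ℤ × ℤ` embeds into `Γ₂ˣ`. (Any two ℤ-orders
are commensurable, so containing a rank-two free abelian subgroup of units does not
depend on the chosen order.) -/
theorem Z2_in_units_order_independent
    (A : Type*) [Ring A] [Algebra ℚ A] [FiniteDimensional ℚ A]
    (Γ₁ Γ₂ : Subring A)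
    (hfg₁ : AddSubgroup.FG Γ₁.toAddSubgroup)
    (hspan₁ : Submodule.span ℚ (Γ₁ : Set A) = ⊤)
    (hfg₂ : AddSubgroup.FG Γ₂.toAddSubgroup)
    (hspan₂ : Submodule.span ℚ (Γ₂ : Set A) = ⊤)
    (h : ∃ f : Multiplicative (ℤ × ℤ) →* Γ₁ˣ, Function.Injective f) :
    ∃ f : Multiplicative (ℤ × ℤ) →* Γ₂ˣ, Function.Injective f :=
  Z2_in_units_order_independent_general A Γ₁ Γ₂ hfg₁ hspan₂ h
end
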